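/- Let n ≠ m be positive integers and let γ be a real number with γ² = γ*_{n,m}. Then either λ*_{n,+}(γ) = λ*_{m,+}(γ) or λ*_{n,−}(γ) = λ*_{m,−}(γ); i.e. the same-sign bifurcation values for the modes n and m coincide. -/

import Mathlib

/-- `T h n = tanh (n h) / n`. -/
noncomputable def T (h : ℝ) (n : ℕ) : ℝ := Real.tanh (n * h) / n

/-- `λ*_{n,+}(γ)`. -/
noncomputable def lamPlus (h g E22 γ : ℝ) (n : ℕ) : ℝ :=
  γ / 2 * T h n + Real.sqrt (γ ^ 2 * (T h n) ^ 2 / 4 + (g + n ^ 4 * E22 / 2) * T h n)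

/-- `λ*_{n,−}(γ)`. -/
noncomputable def lamMinus (h g E22 γ : ℝ) (n : ℕ) : ℝ :=
  γ / 2 * T h n - Real.sqrt (γ ^ 2 * (T h n) ^ 2 / 4 + (g + n ^ 4 * E22 / 2) * T h n)

/-- The critical vorticity value `γ*_{n,m}`. -/
noncomputable def gammaStar (h g E22 : ℝ) (n m : ℕ) : ℝ :=
  ((2 * g + n ^ 4 * E22) * T h n - (2 * g + m ^ 4 * E22) * T h m) ^ 2 /
    (2 * T h n * T h m * (T h n - T h m) * ((m : ℝ) ^ 4 - (n : ℝ) ^ 4) * E22)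

/-!
Write `p_k = (g + k⁴ E₂₂ / 2) T_k`, so that `λ*_{k,±}` are the roots of `λ² - γ T_k λ - p_k`.
Clearing the denominator, `γ² = γ*_{n,m}` reads `γ² (T_n - T_m)(T_n p_m - T_m p_n) = (p_n - p_m)²`,
which is exactly what makes the product of the two square roots equal to
`γ² T_n T_m / 4 + (p_n + p_m) / 2`. Expanding the square of their difference then gives
`√(…)_n - √(…)_m = ± γ (T_n - T_m) / 2`, i.e. the `-` or the `+` values coincide.
The denominator of `γ*_{n,m}` is nonzero because `tanh x / x` is strictly decreasing on `(0, ∞)`.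
-/

lemma strictAntiOn_tanh_div_self : StrictAntiOn (fun x => Real.tanh x / x) (Set.Ioi 0) := by
  have htanh : (fun x => Real.tanh x / x) = fun x => Real.sinh x / (Real.cosh x * x) := by
    funext x
    rw [Real.tanh_eq_sinh_div_cosh, div_div]
  rw [htanh]
  refine strictAntiOn_of_deriv_neg (convex_Ioi 0) ?_ ?_
  · refine Real.continuous_sinh.continuousOn.div
      (Real.continuous_cosh.continuousOn.mul continuousOn_id) fun t ht => ?_
    exact mul_ne_zero (Real.cosh_pos t).ne' (ne_of_gt ht)
  · intro t ht
    rw [interior_Ioi] at ht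
    have ht0 : 0 < t := ht
    have hd : HasDerivAt (fun t => Real.sinh t / (Real.cosh t * t))
        ((Real.cosh t * (Real.cosh t * t) - Real.sinh t * (Real.sinh t * t + Real.cosh t * 1)) /
          (Real.cosh t * t) ^ 2) t :=
      (Real.hasDerivAt_sinh t).div ((Real.hasDerivAt_cosh t).mul (hasDerivAt_id t))
        (mul_ne_zero (Real.cosh_pos t).ne' ht0.ne')
    rw [hd.deriv]
    refine div_neg_of_neg_of_pos ?_ (by positivity)
    -- the numerator is `t - sinh t * cosh t`, and `t < sinh t`, `1 ≤ cosh t`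
    have hsinh : t < Real.sinh t := Real.self_lt_sinh_iff.mpr ht0
    have hcosh : 1 ≤ Real.cosh t := Real.one_le_cosh t
    nlinarith [Real.cosh_sq_sub_sinh_sq t, mul_nonneg (ht0.trans hsinh).le (sub_nonneg.mpr hcosh)]

lemma T_pos {h : ℝ} (hh : 0 < h) {n : ℕ} (hn : 0 < n) : 0 < T h n := by
  unfold T
  have : (0 : ℝ) < n := by exact_mod_cast hn
  have : 0 < Real.tanh (n * h) := by
    rw [Real.tanh_eq_sinh_div_cosh]
    exact div_pos (Real.sinh_pos_iff.mpr (by positivity)) (Real.cosh_pos _)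
  positivity

lemma T_strictAntiOn {h : ℝ} (hh : 0 < h) : StrictAntiOn (T h) {n | 0 < n} := by
  intro a ha b hb hab
  have ha' : (0 : ℝ) < a := by exact_mod_cast ha
  have hb' : (0 : ℝ) < b := by exact_mod_cast hb
  have hT : ∀ k : ℕ, (0 : ℝ) < k → T h k = Real.tanh (k * h) / (k * h) * h := fun k hk => by
    unfold T
    field_simp
  rw [hT a ha', hT b hb']
  refine mul_lt_mul_of_pos_right (strictAntiOn_tanh_div_self ?_ ?_ ?_) hh
  · exact mul_pos ha' hh
  · exact mul_pos hb' hh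
  · exact mul_lt_mul_of_pos_right (by exact_mod_cast hab) hh

lemma two_mul_sqrt_mul_sqrt_eq {γ a b p q : ℝ} (hp : 0 ≤ p) (hq : 0 ≤ q) (hab : 0 ≤ a * b)
    (h : γ ^ 2 * ((a - b) * (a * q - b * p)) = (p - q) ^ 2) :
    2 * Real.sqrt (γ ^ 2 * a ^ 2 / 4 + p) * Real.sqrt (γ ^ 2 * b ^ 2 / 4 + q) =
      γ ^ 2 * (a * b) / 2 + p + q := by
  have hprod : (γ ^ 2 * a ^ 2 / 4 + p) * (γ ^ 2 * b ^ 2 / 4 + q) =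
      ((γ ^ 2 * (a * b) / 2 + p + q) / 2) ^ 2 := by
    linear_combination h / 4
  rw [mul_assoc, ← Real.sqrt_mul (by positivity), hprod, Real.sqrt_sq (by positivity)]
  ring

/-- `(p - q)² - γ² (a - b) (a q - b p)` is the resultant of `λ² - γ a λ - p` and
`λ² - γ b λ - q`, whose roots are the two sides of the equations. -/
lemma add_sqrt_eq_or_sub_sqrt_eq {γ a b p q : ℝ} (hp : 0 ≤ p) (hq : 0 ≤ q) (hab : 0 ≤ a * b)
    (h : γ ^ 2 * ((a - b) * (a * q - b * p)) = (p - q) ^ 2) :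
    γ / 2 * a + Real.sqrt (γ ^ 2 * a ^ 2 / 4 + p) = γ / 2 * b + Real.sqrt (γ ^ 2 * b ^ 2 / 4 + q) ∨
    γ / 2 * a - Real.sqrt (γ ^ 2 * a ^ 2 / 4 + p) = γ / 2 * b - Real.sqrt (γ ^ 2 * b ^ 2 / 4 + q) := by
  have hmul := two_mul_sqrt_mul_sqrt_eq hp hq hab h
  have hsa := Real.sq_sqrt (show 0 ≤ γ ^ 2 * a ^ 2 / 4 + p by positivity)
  have hsb := Real.sq_sqrt (show 0 ≤ γ ^ 2 * b ^ 2 / 4 + q by positivity)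
  have hdiff : (Real.sqrt (γ ^ 2 * a ^ 2 / 4 + p) - Real.sqrt (γ ^ 2 * b ^ 2 / 4 + q)) ^ 2 =
      (γ / 2 * (a - b)) ^ 2 := by
    linear_combination hsa + hsb - hmul
  rcases sq_eq_sq_iff_eq_or_eq_neg.mp hdiff with hd | hd
  · right; linarith
  · left; linarith

/-- If `n ≠ m` are positive integers and `γ² = γ*_{n,m}`, then the same-sign
bifurcation values for the modes `n` and `m` coincide:
`λ*_{n,+}(γ) = λ*_{m,+}(γ)` or `λ*_{n,−}(γ) = λ*_{m,−}(γ)`. -/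
theorem same_sign_coincide (h g E22 : ℝ) (hh : 0 < h) (hg : 0 < g)
    (hE : 0 < E22) (n m : ℕ) (hn : 0 < n) (hm : 0 < m) (hnm : n ≠ m)
    (γ : ℝ) (hγ : γ ^ 2 = gammaStar h g E22 n m) :
    lamPlus h g E22 γ n = lamPlus h g E22 γ m ∨
    lamMinus h g E22 γ n = lamMinus h g E22 γ m := by
  have hTn := T_pos hh hn
  have hTm := T_pos hh hm
  have hTne : T h n - T h m ≠ 0 := sub_ne_zero.mpr ((T_strictAntiOn hh).injOn.ne hn hm hnm)
  have hpow : (m : ℝ) ^ 4 - (n : ℝ) ^ 4 ≠ 0 :=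
    sub_ne_zero.mpr (by exact_mod_cast (Nat.pow_left_injective four_ne_zero).ne hnm.symm)
  rw [gammaStar, eq_div_iff (by positivity)] at hγ
  exact add_sqrt_eq_or_sub_sqrt_eq (by positivity) (by positivity) (by positivity)
    (by linear_combination hγ / 4)
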